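/- For all u, v ∈ ℝ³ with u ≠ 0 and v ≠ 0, tr( exp(u·σ) · exp(v·σ) ) = 2·cosh(‖u‖)·cosh(‖v‖) + 2·((u·v)/(‖u‖·‖v‖))·sinh(‖u‖)·sinh(‖v‖), where u·v is the Euclidean inner product. -/

import Mathlib

/-! Since `(u·σ)² = ‖u‖²`, the exponential series of `u·σ` splits into its even and odd parts
`cosh ‖u‖ + (sinh ‖u‖ / ‖u‖) u·σ`. Multiplying two such expressions, the Pauli product rule
`(u·σ)(v·σ) = (u·v) + i (u × v)·σ` and the tracelessness of `w·σ` leave only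
`2 cosh ‖u‖ cosh ‖v‖ + 2 (u·v) (sinh ‖u‖ / ‖u‖) (sinh ‖v‖ / ‖v‖)`. -/

open Matrix

/-- For `v ∈ ℝ³`, the matrix `v·σ = v₁σ₁ + v₂σ₂ + v₃σ₃` built from the Pauli matrices. -/
noncomputable def pauliDot (v : EuclideanSpace ℝ (Fin 3)) : Matrix (Fin 2) (Fin 2) ℂ :=
  (v 0 : ℂ) • !![0, 1; 1, 0] +
  (v 1 : ℂ) • !![0, -Complex.I; Complex.I, 0] +
  (v 2 : ℂ) • !![1, 0; 0, -1]

section SquareScalar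

variable {𝔸 : Type*} [Ring 𝔸] [Algebra ℂ 𝔸] [TopologicalSpace 𝔸] [IsTopologicalRing 𝔸]
  [ContinuousSMul ℂ 𝔸] [T2Space 𝔸]

theorem NormedSpace.exp_eq_cosh_add_sinh_div_of_mul_self {a : 𝔸} {c : ℂ} (hc : c ≠ 0)
    (ha : a * a = c ^ 2 • 1) :
    NormedSpace.exp a = Complex.cosh c • 1 + (Complex.sinh c / c) • a := by
  have pow_even (k : ℕ) : a ^ (2 * k) = c ^ (2 * k) • 1 := by
    rw [pow_mul, pow_mul, sq, ha, smul_pow, one_pow]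
  have pow_odd (k : ℕ) : a ^ (2 * k + 1) = c ^ (2 * k) • a := by
    rw [pow_succ, pow_even, smul_one_mul]
  have even_terms : HasSum (fun k ↦ ((2 * k).factorial : ℂ)⁻¹ • a ^ (2 * k))
      (Complex.cosh c • 1) := by
    convert (Complex.hasSum_cosh c).smul_const (1 : 𝔸) using 2 with k
    rw [pow_even, smul_smul, div_eq_inv_mul]
  have odd_terms : HasSum (fun k ↦ ((2 * k + 1).factorial : ℂ)⁻¹ • a ^ (2 * k + 1))
      ((Complex.sinh c / c) • a) := by
    convert ((Complex.hasSum_sinh c).div_const c).smul_const a using 2 with k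
    rw [pow_odd, smul_smul]
    congr 1
    field_simp
    ring
  rw [NormedSpace.exp_eq_tsum ℂ]
  exact (HasSum.even_add_odd (f := fun n ↦ (n.factorial : ℂ)⁻¹ • a ^ n)
    even_terms odd_terms).tsum_eq

end SquareScalar

theorem pauliDot_zero : pauliDot 0 = 0 := by
  simp [pauliDot]

theorem trace_pauliDot (v : EuclideanSpace ℝ (Fin 3)) : (pauliDot v).trace = 0 := by
  simp [pauliDot, Matrix.trace_fin_two]

theorem pauliDot_mul_pauliDot (u v : EuclideanSpace ℝ (Fin 3)) :
    pauliDot u * pauliDot v = (inner ℝ u v : ℂ) • 1 +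
      Complex.I • pauliDot (WithLp.toLp 2 (WithLp.ofLp u ⨯₃ WithLp.ofLp v)) := by
  ext i j
  fin_cases i <;> fin_cases j <;>
    simp [pauliDot, cross_apply, Matrix.mul_apply, Fin.sum_univ_two, Fin.sum_univ_three,
      PiLp.inner_apply] <;>
    ring_nf <;> simp only [Complex.I_sq] <;> ring

theorem pauliDot_mul_self (v : EuclideanSpace ℝ (Fin 3)) :
    pauliDot v * pauliDot v = (‖v‖ : ℂ) ^ 2 • 1 := by
  rw [pauliDot_mul_pauliDot, cross_self, WithLp.toLp_zero, pauliDot_zero, smul_zero, add_zero,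
    real_inner_self_eq_norm_sq]
  push_cast
  rfl

theorem trace_pauliDot_mul_pauliDot (u v : EuclideanSpace ℝ (Fin 3)) :
    (pauliDot u * pauliDot v).trace = 2 * inner ℝ u v := by
  simp [pauliDot_mul_pauliDot, trace_pauliDot, mul_comm]

theorem exp_pauliDot {v : EuclideanSpace ℝ (Fin 3)} (hv : v ≠ 0) :
    NormedSpace.exp (pauliDot v) =
      (Real.cosh ‖v‖ : ℂ) • 1 + ((Real.sinh ‖v‖ / ‖v‖ : ℝ) : ℂ) • pauliDot v := by
  have hnorm : (‖v‖ : ℂ) ≠ 0 := by exact_mod_cast norm_ne_zero_iff.mpr hv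
  rw [NormedSpace.exp_eq_cosh_add_sinh_div_of_mul_self hnorm (pauliDot_mul_self v)]
  push_cast
  rfl

/-- For nonzero `u, v ∈ ℝ³`:
`tr(exp(u·σ) exp(v·σ)) = 2 cosh‖u‖ cosh‖v‖ + 2 (⟨u,v⟩/(‖u‖‖v‖)) sinh‖u‖ sinh‖v‖`. -/
theorem statement5 (u v : EuclideanSpace ℝ (Fin 3)) (hu : u ≠ 0) (hv : v ≠ 0) :
    (NormedSpace.exp (pauliDot u) * NormedSpace.exp (pauliDot v)).trace =
      ((2 * Real.cosh ‖u‖ * Real.cosh ‖v‖ +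
        2 * ((inner ℝ u v : ℝ) / (‖u‖ * ‖v‖)) * Real.sinh ‖u‖ * Real.sinh ‖v‖ : ℝ) : ℂ) := by
  rw [exp_pauliDot hu, exp_pauliDot hv]
  simp only [add_mul, mul_add, smul_mul_smul_comm, one_mul, mul_one, trace_add, trace_smul,
    trace_one, trace_pauliDot, trace_pauliDot_mul_pauliDot, Fintype.card_fin, smul_eq_mul,
    mul_zero, add_zero]
  push_cast
  ring
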